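/- arXiv:2401.00478 — 2 statements merged into one kernel-verified Lean document; each statement's English description precedes it below -/
import Mathlib

section
/- Let p₁ > 0 and p₂ ≠ 0, and let D, R, I : ℝ → ℝ be differentiable functions satisfying D' = 2I·(p₁D + p₂R), R' = 2I·(-p₂D + p₁R), I' = -2p₁(D² + R²) on ℝ. Set ρ := √(D(0)² + R(0)² + I(0)²) and assume (D(0),R(0),I(0)) ≠ (0,0,ρ) and (D(0),R(0),I(0)) ≠ (0,0,-ρ). Then there exists τ₀ ∈ ℝ with (cos(τ₀ + (p₂/p₁)·log(2ρ)), sin(τ₀ + (p₂/p₁)·log(2ρ))) = (D(0),R(0))/√(D(0)²+R(0)²) such that for all τ ∈ ℝ: D(τ) = ρ·cos(τ₀ + (p₂/p₁)·log((ρ-I(0))·e^{2p₁ρτ} + (ρ+I(0))·e^{-2p₁ρτ})) / cosh(2p₁ρτ - artanh(I(0)/ρ)), R(τ) = ρ·sin(τ₀ + (p₂/p₁)·log((ρ-I(0))·e^{2p₁ρτ} + (ρ+I(0))·e^{-2p₁ρτ})) / cosh(2p₁ρτ - artanh(I(0)/ρ)), and I(τ) = -ρ·tanh(2p₁ρτ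 - artanh(I(0)/ρ)). -/
/-- The real inverse hyperbolic tangent. -/
noncomputable def artanh (x : ℝ) : ℝ := Real.log ((1 + x) / (1 - x)) / 2

/-! `D² + R² + I²` is a first integral, so every solution stays on the sphere of radius `ρ`;
there the polynomial vector field is Lipschitz and a solution is determined by its value at `0`.
It remains to check that the explicit curve solves the system. Put `a = artanh (I 0 / ρ)` and
`θ = 2 p₁ ρ τ - a`: the curve `(ρ cos φ / cosh θ, ρ sin φ / cosh θ, -ρ tanh θ)` solves the system as
soon as `θ' = 2 p₁ ρ` and `φ' = 2 p₂ ρ tanh θ`, and the logarithmic phase of the formula has this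
derivative because `(ρ - I 0) e^x + (ρ + I 0) e^{-x} = (2 ρ / cosh a) cosh (x - a)`. -/

open Real hiding artanh
open Set Metric

theorem Real.hasDerivAt_tanh (x : ℝ) : HasDerivAt tanh (1 / cosh x ^ 2) x := by
  have h := (hasDerivAt_sinh x).div (hasDerivAt_cosh x) (cosh_pos x).ne'
  rw [show tanh = sinh / cosh from funext tanh_eq_sinh_div_cosh]
  refine h.congr_deriv ?_
  rw [← cosh_sq_sub_sinh_sq x]
  ring

theorem one_sub_tanh_mul_exp_add (a x : ℝ) :
    (1 - tanh a) * exp x + (1 + tanh a) * exp (-x) = 2 * cosh (x - a) / cosh a := by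
  have ha := (cosh_pos a).ne'
  rw [tanh_eq_sinh_div_cosh, cosh_eq, sinh_eq, cosh_eq, neg_sub, exp_sub, exp_sub, exp_neg, exp_neg]
  field_simp
  ring

theorem artanh_eq_real_artanh {x : ℝ} (hx : x ∈ Ioo (-1) 1) : artanh x = Real.artanh x := by
  rw [Real.artanh_eq_half_log (Ioo_subset_Icc_self hx), artanh]
  ring

theorem div_mem_Ioo_of_abs_lt {ι ρ : ℝ} (hι : |ι| < ρ) : ι / ρ ∈ Ioo (-1) 1 := by
  have hρ : 0 < ρ := (abs_nonneg ι).trans_lt hι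
  rw [mem_Ioo, lt_div_iff₀ hρ, div_lt_one hρ]
  constructor <;> linarith [abs_lt.mp hι]

theorem mul_tanh_artanh_div {ι ρ : ℝ} (hι : |ι| < ρ) : ρ * tanh (artanh (ι / ρ)) = ι := by
  have hρ : 0 < ρ := (abs_nonneg ι).trans_lt hι
  rw [artanh_eq_real_artanh (div_mem_Ioo_of_abs_lt hι),
    Real.tanh_artanh (div_mem_Ioo_of_abs_lt hι)]
  field_simp

theorem exists_cos_sin_eq_div_sqrt {x y : ℝ} (h : x ^ 2 + y ^ 2 ≠ 0) :
    ∃ β, cos β = x / √(x ^ 2 + y ^ 2) ∧ sin β = y / √(x ^ 2 + y ^ 2) := by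
  have hz : (⟨x, y⟩ : ℂ) ≠ 0 := fun h0 => h (by simp_all [Complex.ext_iff])
  have hnorm : ‖(⟨x, y⟩ : ℂ)‖ = √(x ^ 2 + y ^ 2) := by
    rw [Complex.norm_def, Complex.normSq_mk, sq, sq]
  exact ⟨Complex.arg ⟨x, y⟩, by rw [Complex.cos_arg hz, hnorm], by rw [Complex.sin_arg, hnorm]⟩

theorem abs_lt_of_ne_pole {x y z ρ : ℝ} (hρ : ρ = √(x ^ 2 + y ^ 2 + z ^ 2))
    (h₁ : (x, y, z) ≠ (0, 0, ρ)) (h₂ : (x, y, z) ≠ (0, 0, -ρ)) : |z| < ρ := by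
  have hsq : ρ ^ 2 = x ^ 2 + y ^ 2 + z ^ 2 := by rw [hρ, sq_sqrt (by positivity)]
  have hρ0 : 0 ≤ ρ := hρ ▸ sqrt_nonneg _
  refine (abs_le_of_sq_le_sq (by nlinarith [sq_nonneg x, sq_nonneg y]) hρ0).lt_of_ne fun hz => ?_
  have hx : x = 0 := by nlinarith [sq_nonneg x, sq_nonneg y, sq_abs z]
  have hy : y = 0 := by nlinarith [sq_nonneg x, sq_nonneg y, sq_abs z]
  rcases abs_eq hρ0 |>.mp hz with hz | hz
  · exact h₁ (by rw [hx, hy, hz])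
  · exact h₂ (by rw [hx, hy, hz])

theorem mem_closedBall_zero_of_sq_add_sq_add_sq {u : ℝ × ℝ × ℝ} {ρ : ℝ} (hρ : 0 ≤ ρ)
    (h : u.1 ^ 2 + u.2.1 ^ 2 + u.2.2 ^ 2 = ρ ^ 2) : u ∈ closedBall 0 ρ := by
  obtain ⟨x, y, z⟩ := u
  simp only [mem_closedBall_zero_iff, Prod.norm_mk, Real.norm_eq_abs, max_le_iff]
  refine ⟨abs_le_of_sq_le_sq ?_ hρ, abs_le_of_sq_le_sq ?_ hρ, abs_le_of_sq_le_sq ?_ hρ⟩ <;>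
    nlinarith [sq_nonneg x, sq_nonneg y, sq_nonneg z]

theorem eq_of_hasDerivAt_of_mem_isCompact {E : Type*} [NormedAddCommGroup E] [NormedSpace ℝ E]
    {v : E → E} (hv : ContDiff ℝ 1 v) {s : Set E} (hs : IsCompact s) {f g : ℝ → E}
    (hf : ∀ t, HasDerivAt f (v (f t)) t ∧ f t ∈ s) (hg : ∀ t, HasDerivAt g (v (g t)) t ∧ g t ∈ s)
    {t₀ : ℝ} (h : f t₀ = g t₀) : f = g := by
  obtain ⟨K, hK⟩ := hv.locallyLipschitz.locallyLipschitzOn.exists_lipschitzOnWith_of_compact hs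
  exact ODE_solution_unique_univ (fun _ => hK) hf hg h

noncomputable section

def caseFiveField (p₁ p₂ : ℝ) (u : ℝ × ℝ × ℝ) : ℝ × ℝ × ℝ :=
  (2 * u.2.2 * (p₁ * u.1 + p₂ * u.2.1), 2 * u.2.2 * (-(p₂ * u.1) + p₁ * u.2.1),
    -(2 * p₁ * (u.1 ^ 2 + u.2.1 ^ 2)))

theorem contDiff_caseFiveField (p₁ p₂ : ℝ) : ContDiff ℝ 1 (caseFiveField p₁ p₂) := by
  unfold caseFiveField
  fun_prop

theorem caseFiveField_sq_add_sq_add_sq_eq {p₁ p₂ : ℝ} {u : ℝ → ℝ × ℝ × ℝ}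
    (hu : ∀ t, HasDerivAt u (caseFiveField p₁ p₂ (u t)) t) (t s : ℝ) :
    (u t).1 ^ 2 + (u t).2.1 ^ 2 + (u t).2.2 ^ 2 = (u s).1 ^ 2 + (u s).2.1 ^ 2 + (u s).2.2 ^ 2 := by
  have hderiv : ∀ t, HasDerivAt (fun t => (u t).1 ^ 2 + (u t).2.1 ^ 2 + (u t).2.2 ^ 2) 0 t := by
    intro t
    have h₁ := (hasFDerivAt_fst.comp_hasDerivAt t (hu t))
    have h₂ := ((hasFDerivAt_fst.comp (u t) hasFDerivAt_snd).comp_hasDerivAt t (hu t))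
    have h₃ := ((hasFDerivAt_snd.comp (u t) hasFDerivAt_snd).comp_hasDerivAt t (hu t))
    refine ((h₁.pow 2).add (h₂.pow 2)).add (h₃.pow 2) |>.congr_deriv ?_
    simp only [caseFiveField, Function.comp_apply, ContinuousLinearMap.comp_apply,
      ContinuousLinearMap.coe_fst', ContinuousLinearMap.coe_snd']
    ring
  exact is_const_of_deriv_eq_zero (fun t => (hderiv t).differentiableAt)
    (fun t => (hderiv t).deriv) t s

-- The point of longitude `φ t` and Mercator coordinate `-θ t` on the sphere of radius `ρ`.
def mercatorCurve (ρ : ℝ) (φ θ : ℝ → ℝ) (t : ℝ) : ℝ × ℝ × ℝ :=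
  (ρ * cos (φ t) / cosh (θ t), ρ * sin (φ t) / cosh (θ t), -ρ * tanh (θ t))

theorem mercatorCurve_sq_add_sq_add_sq (ρ : ℝ) (φ θ : ℝ → ℝ) (t : ℝ) :
    (mercatorCurve ρ φ θ t).1 ^ 2 + (mercatorCurve ρ φ θ t).2.1 ^ 2 +
      (mercatorCurve ρ φ θ t).2.2 ^ 2 = ρ ^ 2 := by
  have hc := (cosh_pos (θ t)).ne'
  simp only [mercatorCurve, tanh_eq_sinh_div_cosh]
  field_simp
  linear_combination ρ ^ 2 * sin_sq_add_cos_sq (φ t) - ρ ^ 2 * cosh_sq_sub_sinh_sq (θ t)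

theorem hasDerivAt_mercatorCurve {p₁ p₂ ρ t : ℝ} {φ θ : ℝ → ℝ}
    (hφ : HasDerivAt φ (2 * p₂ * ρ * tanh (θ t)) t) (hθ : HasDerivAt θ (2 * p₁ * ρ) t) :
    HasDerivAt (mercatorCurve ρ φ θ) (caseFiveField p₁ p₂ (mercatorCurve ρ φ θ t)) t := by
  have hc := (cosh_pos (θ t)).ne'
  have hD := (hφ.cos.const_mul ρ).div hθ.cosh hc
  have hR := (hφ.sin.const_mul ρ).div hθ.cosh hc
  have hI := ((hasDerivAt_tanh (θ t)).comp t hθ).const_mul (-ρ)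
  refine (hD.prodMk (hR.prodMk hI)).congr_deriv ?_
  simp only [caseFiveField, mercatorCurve, Prod.mk.injEq, tanh_eq_sinh_div_cosh]
  refine ⟨?_, ?_, ?_⟩
  · field_simp; ring
  · field_simp; ring
  · field_simp
    linear_combination p₁ * ρ ^ 2 * sin_sq_add_cos_sq (φ t)

theorem hasDerivAt_explicitPhase {p₁ p₂ ρ ι a : ℝ} (hp₁ : p₁ ≠ 0) (hρ : ρ ≠ 0)
    (hι : ι = ρ * tanh a) (τ₀ τ : ℝ) :
    HasDerivAt (fun τ => τ₀ + p₂ / p₁ *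
        log ((ρ - ι) * exp (2 * p₁ * ρ * τ) + (ρ + ι) * exp (-(2 * p₁ * ρ * τ))))
      (2 * p₂ * ρ * tanh (2 * p₁ * ρ * τ - a)) τ := by
  have hL : ∀ τ, (ρ - ι) * exp (2 * p₁ * ρ * τ) + (ρ + ι) * exp (-(2 * p₁ * ρ * τ))
      = 2 * ρ / cosh a * cosh (2 * p₁ * ρ * τ - a) := fun τ => by
    rw [hι]
    linear_combination ρ * one_sub_tanh_mul_exp_add a (2 * p₁ * ρ * τ)
  simp only [hL]
  have hθ : HasDerivAt (fun τ => 2 * p₁ * ρ * τ - a) (2 * p₁ * ρ) τ := by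
    simpa using ((hasDerivAt_id τ).const_mul (2 * p₁ * ρ)).sub_const a
  have hK : 2 * ρ / cosh a * cosh (2 * p₁ * ρ * τ - a) ≠ 0 := by
    have := cosh_pos a; have := cosh_pos (2 * p₁ * ρ * τ - a); positivity
  refine (((hθ.cosh.const_mul (2 * ρ / cosh a)).log hK).const_mul (p₂ / p₁)).const_add τ₀
    |>.congr_deriv ?_
  have := (cosh_pos a).ne'
  have := (cosh_pos (2 * p₁ * ρ * τ - a)).ne'
  rw [tanh_eq_sinh_div_cosh]
  field_simp

def explicitSolution (p₁ p₂ ρ ι τ₀ : ℝ) : ℝ → ℝ × ℝ × ℝ :=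
  mercatorCurve ρ
    (fun τ => τ₀ + p₂ / p₁ *
      log ((ρ - ι) * exp (2 * p₁ * ρ * τ) + (ρ + ι) * exp (-(2 * p₁ * ρ * τ))))
    (fun τ => 2 * p₁ * ρ * τ - artanh (ι / ρ))

theorem hasDerivAt_explicitSolution {p₁ p₂ ρ ι : ℝ} (hp₁ : p₁ ≠ 0) (hι : |ι| < ρ) (τ₀ τ : ℝ) :
    HasDerivAt (explicitSolution p₁ p₂ ρ ι τ₀)
      (caseFiveField p₁ p₂ (explicitSolution p₁ p₂ ρ ι τ₀ τ)) τ := by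
  have hρ : ρ ≠ 0 := ((abs_nonneg ι).trans_lt hι).ne'
  refine hasDerivAt_mercatorCurve
    (hasDerivAt_explicitPhase hp₁ hρ (mul_tanh_artanh_div hι).symm τ₀ τ) ?_
  simpa using ((hasDerivAt_id τ).const_mul (2 * p₁ * ρ)).sub_const (artanh (ι / ρ))

theorem explicitSolution_zero {p₁ p₂ ρ ι : ℝ} (hι : |ι| < ρ) (τ₀ : ℝ) :
    explicitSolution p₁ p₂ ρ ι τ₀ 0 =
      (√(ρ ^ 2 - ι ^ 2) * cos (τ₀ + p₂ / p₁ * log (2 * ρ)),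
        √(ρ ^ 2 - ι ^ 2) * sin (τ₀ + p₂ / p₁ * log (2 * ρ)), ι) := by
  have hρ : 0 < ρ := (abs_nonneg ι).trans_lt hι
  have hx := div_mem_Ioo_of_abs_lt hι
  have hs : ρ / cosh (Real.artanh (ι / ρ)) = √(ρ ^ 2 - ι ^ 2) := by
    rw [Real.cosh_artanh hx, div_div_eq_mul_div, div_one,
      show ρ ^ 2 - ι ^ 2 = ρ ^ 2 * (1 - (ι / ρ) ^ 2) by field_simp, sqrt_mul (sq_nonneg ρ),
      sqrt_sq hρ.le]
  simp only [explicitSolution, mercatorCurve, mul_zero, neg_zero, exp_zero, mul_one, zero_sub,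
    cosh_neg, tanh_neg, artanh_eq_real_artanh hx, Real.tanh_artanh hx, Prod.mk.injEq]
  rw [show ρ - ι + (ρ + ι) = 2 * ρ by ring, ← hs]
  refine ⟨by ring, by ring, by field_simp⟩

end

theorem stmt_3_general (p₁ p₂ : ℝ) (hp₁ : 0 < p₁) (D R I : ℝ → ℝ)
    (hD : ∀ τ, HasDerivAt D (2 * I τ * (p₁ * D τ + p₂ * R τ)) τ)
    (hR : ∀ τ, HasDerivAt R (2 * I τ * (-(p₂ * D τ) + p₁ * R τ)) τ)
    (hI : ∀ τ, HasDerivAt I (-(2 * p₁ * (D τ ^ 2 + R τ ^ 2))) τ)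
    (ρ : ℝ) (hρ : ρ = Real.sqrt (D 0 ^ 2 + R 0 ^ 2 + I 0 ^ 2))
    (hne₁ : (D 0, R 0, I 0) ≠ (0, 0, ρ))
    (hne₂ : (D 0, R 0, I 0) ≠ (0, 0, -ρ)) :
    ∃ τ₀ : ℝ,
      Real.cos (τ₀ + p₂ / p₁ * Real.log (2 * ρ)) = D 0 / Real.sqrt (D 0 ^ 2 + R 0 ^ 2) ∧
      Real.sin (τ₀ + p₂ / p₁ * Real.log (2 * ρ)) = R 0 / Real.sqrt (D 0 ^ 2 + R 0 ^ 2) ∧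
      ∀ τ : ℝ,
        D τ = ρ * Real.cos (τ₀ + p₂ / p₁ *
                Real.log ((ρ - I 0) * Real.exp (2 * p₁ * ρ * τ)
                          + (ρ + I 0) * Real.exp (-(2 * p₁ * ρ * τ))))
              / Real.cosh (2 * p₁ * ρ * τ - artanh (I 0 / ρ)) ∧
        R τ = ρ * Real.sin (τ₀ + p₂ / p₁ *
                Real.log ((ρ - I 0) * Real.exp (2 * p₁ * ρ * τ)
                          + (ρ + I 0) * Real.exp (-(2 * p₁ * ρ * τ))))
              / Real.cosh (2 * p₁ * ρ * τ - artanh (I 0 / ρ)) ∧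
        I τ = -ρ * Real.tanh (2 * p₁ * ρ * τ - artanh (I 0 / ρ)) := by
  set u : ℝ → ℝ × ℝ × ℝ := fun t => (D t, R t, I t)
  have hu : ∀ t, HasDerivAt u (caseFiveField p₁ p₂ (u t)) t :=
    fun t => (hD t).prodMk ((hR t).prodMk (hI t))
  have hρ0 : 0 ≤ ρ := hρ ▸ sqrt_nonneg _
  have hρsq : D 0 ^ 2 + R 0 ^ 2 + I 0 ^ 2 = ρ ^ 2 := by rw [hρ, sq_sqrt (by positivity)]
  have hI₀ : |I 0| < ρ := abs_lt_of_ne_pole hρ hne₁ hne₂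
  have hr : √(D 0 ^ 2 + R 0 ^ 2) = √(ρ ^ 2 - I 0 ^ 2) := by rw [← hρsq, add_sub_cancel_right]
  have hr0 : √(D 0 ^ 2 + R 0 ^ 2) ≠ 0 := by
    rw [hr, sqrt_ne_zero']
    nlinarith [sq_abs (I 0), abs_nonneg (I 0)]
  obtain ⟨β, hcos, hsin⟩ := exists_cos_sin_eq_div_sqrt (sqrt_ne_zero'.mp hr0).ne'
  set τ₀ := β - p₂ / p₁ * log (2 * ρ)
  have hβ : τ₀ + p₂ / p₁ * log (2 * ρ) = β := sub_add_cancel _ _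
  have hinit : u 0 = explicitSolution p₁ p₂ ρ (I 0) τ₀ 0 := by
    rw [explicitSolution_zero hI₀, hβ, hcos, hsin, ← hr, mul_div_cancel₀ _ hr0,
      mul_div_cancel₀ _ hr0]
  have hsol : u = explicitSolution p₁ p₂ ρ (I 0) τ₀ :=
    eq_of_hasDerivAt_of_mem_isCompact (contDiff_caseFiveField p₁ p₂) (isCompact_closedBall 0 ρ)
      (fun t => ⟨hu t, mem_closedBall_zero_of_sq_add_sq_add_sq hρ0
        ((caseFiveField_sq_add_sq_add_sq_eq hu t 0).trans hρsq)⟩)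
      (fun t => ⟨hasDerivAt_explicitSolution hp₁.ne' hI₀ τ₀ t,
        mem_closedBall_zero_of_sq_add_sq_add_sq hρ0 (mercatorCurve_sq_add_sq_add_sq _ _ _ t)⟩)
      hinit
  refine ⟨τ₀, by rw [hβ, hcos], by rw [hβ, hsin], fun τ => ?_⟩
  have h := congrFun hsol τ
  exact ⟨congrArg Prod.fst h, congrArg (·.2.1) h, congrArg (·.2.2) h⟩

/-- Case 5 (combination of p₁- and p₂-components) of the quadratic system:
explicit solution. -/
theorem stmt_3 (p₁ p₂ : ℝ) (hp₁ : 0 < p₁) (hp₂ : p₂ ≠ 0) (D R I : ℝ → ℝ)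
    (hD : ∀ τ, HasDerivAt D (2 * I τ * (p₁ * D τ + p₂ * R τ)) τ)
    (hR : ∀ τ, HasDerivAt R (2 * I τ * (-(p₂ * D τ) + p₁ * R τ)) τ)
    (hI : ∀ τ, HasDerivAt I (-(2 * p₁ * (D τ ^ 2 + R τ ^ 2))) τ)
    (ρ : ℝ) (hρ : ρ = Real.sqrt (D 0 ^ 2 + R 0 ^ 2 + I 0 ^ 2))
    (hne₁ : (D 0, R 0, I 0) ≠ (0, 0, ρ))
    (hne₂ : (D 0, R 0, I 0) ≠ (0, 0, -ρ)) :
    ∃ τ₀ : ℝ,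
      Real.cos (τ₀ + p₂ / p₁ * Real.log (2 * ρ)) = D 0 / Real.sqrt (D 0 ^ 2 + R 0 ^ 2) ∧
      Real.sin (τ₀ + p₂ / p₁ * Real.log (2 * ρ)) = R 0 / Real.sqrt (D 0 ^ 2 + R 0 ^ 2) ∧
      ∀ τ : ℝ,
        D τ = ρ * Real.cos (τ₀ + p₂ / p₁ *
                Real.log ((ρ - I 0) * Real.exp (2 * p₁ * ρ * τ)
                          + (ρ + I 0) * Real.exp (-(2 * p₁ * ρ * τ))))
              / Real.cosh (2 * p₁ * ρ * τ - artanh (I 0 / ρ)) ∧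
        R τ = ρ * Real.sin (τ₀ + p₂ / p₁ *
                Real.log ((ρ - I 0) * Real.exp (2 * p₁ * ρ * τ)
                          + (ρ + I 0) * Real.exp (-(2 * p₁ * ρ * τ))))
              / Real.cosh (2 * p₁ * ρ * τ - artanh (I 0 / ρ)) ∧
        I τ = -ρ * Real.tanh (2 * p₁ * ρ * τ - artanh (I 0 / ρ)) :=
  stmt_3_general p₁ p₂ hp₁ D R I hD hR hI ρ hρ hne₁ hne₂
end

section
/- Let 0 < p₁ < p₄, ρ > 0, and set a := p₄/p₁ > 1. Let D, R, I : ℝ → ℝ be differentiable functions satisfying D' = 2p₁·I·D, R' = 2p₁·I·R - 2p₄ρ·I, I' = -2p₁(D² + R²) + 2p₄ρ·R on ℝ, with D(0)² + R(0)² + I(0)² = ρ², and assume (D(0),R(0),I(0)) is not one of the two fixed points (±ρ√(1 - 1/a²), ρ/a, 0). Set M := √((aρ - R(0))² - (a² - 1)·D(0)²). Then there exists τ₀ ∈ (-π, π] with τ₀·I(0) ≥ 0 and (a² - 1)ρ / (a(aρ - R(0)) - M·cos(τ₀)) = 1 such that for all τ ∈ ℝ: D(τ) = (a² - 1)ρ·D(0)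 / (a(aρ - R(0)) - M·cos(2p₁ρ√(a²-1)·τ - τ₀)), R(τ) = aρ + (a² - 1)ρ·(R(0) - aρ) / (a(aρ - R(0)) - M·cos(2p₁ρ√(a²-1)·τ - τ₀)), and I(τ) = -ρ√(a²-1)·M·sin(2p₁ρ√(a²-1)·τ - τ₀) / (a(aρ - R(0)) - M·cos(2p₁ρ√(a²-1)·τ - τ₀)). -/
/-!
Both `D` and `p₁ R - p₄ ρ` satisfy `f' = 2 p₁ I f`, so their products with an integrating factor
`F > 0`, `F' = -2 p₁ I F`, `F(0) = (a² - 1) ρ`, are conserved. On the invariant sphere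
`D² + R² + I² = ρ²` this makes `F` a forced harmonic oscillator,
`F'' = -ω² (F - a (a ρ - R(0)))` with `ω = 2 p₁ ρ √(a² - 1)`, so `F` is the common denominator
`a (a ρ - R(0)) - M cos (ω τ - τ₀)`, and `D`, `R` and `I = -F' / (2 p₁ F)` are read off from it.
The phase `τ₀` is the polar angle of `(ρ - a R(0), √(a² - 1) I(0))`, a vector of length `M`.
-/

open Real

theorem eq_of_forall_hasDerivAt_zero {f : ℝ → ℝ} (hf : ∀ t, HasDerivAt f 0 t) (t : ℝ) :
    f t = f 0 :=
  is_const_of_deriv_eq_zero (fun x => (hf x).differentiableAt) (fun x => (hf x).deriv) t 0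

theorem mul_eq_of_hasDerivAt_mul_self {f u g : ℝ → ℝ}
    (hf : ∀ t, HasDerivAt f (g t * f t) t) (hu : ∀ t, HasDerivAt u (-g t * u t) t) (t : ℝ) :
    f t * u t = f 0 * u 0 :=
  eq_of_forall_hasDerivAt_zero (fun x => ((hf x).mul (hu x)).congr_deriv (by ring)) t

theorem exists_pos_hasDerivAt_mul_self {g : ℝ → ℝ} (hg : Continuous g) {c : ℝ}
    (hc : 0 < c) :
    ∃ u : ℝ → ℝ, u 0 = c ∧ (∀ t, 0 < u t) ∧ ∀ t, HasDerivAt u (g t * u t) t := by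
  refine ⟨fun t => c * exp (∫ s in (0 : ℝ)..t, g s), by simp, fun t => by positivity,
    fun t => ?_⟩
  have hint := (hg.integral_hasStrictDerivAt 0 t).hasDerivAt
  exact (hint.exp.const_mul c).congr_deriv (by ring)

theorem eq_zero_of_hasDerivAt_harmonic {ω : ℝ} {w v : ℝ → ℝ}
    (hw : ∀ t, HasDerivAt w (v t) t) (hv : ∀ t, HasDerivAt v (-ω ^ 2 * w t) t)
    (hw0 : w 0 = 0) (hv0 : v 0 = 0) (t : ℝ) : w t = 0 ∧ v t = 0 := by
  have henergy : ∀ t, v t ^ 2 + ω ^ 2 * w t ^ 2 = 0 := fun t => by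
    have hconst := eq_of_forall_hasDerivAt_zero
      (f := fun t => v t ^ 2 + ω ^ 2 * w t ^ 2)
      (fun x => (((hv x).pow 2).add (((hw x).pow 2).const_mul (ω ^ 2))).congr_deriv
        (by ring)) t
    simpa [hw0, hv0] using hconst
  have hv_zero : ∀ t, v t = 0 := fun t => by
    nlinarith [henergy t, sq_nonneg (v t), sq_nonneg (ω * w t)]
  refine ⟨?_, hv_zero t⟩
  rw [eq_of_forall_hasDerivAt_zero (fun x => (hw x).congr_deriv (hv_zero x)) t, hw0]

theorem hasDerivAt_harmonic_eq {ω c m φ : ℝ} {y z : ℝ → ℝ}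
    (hy : ∀ t, HasDerivAt y (z t) t) (hz : ∀ t, HasDerivAt z (-ω ^ 2 * (y t - c)) t)
    (hy0 : y 0 = c - m * cos φ) (hz0 : z 0 = -(ω * m * sin φ)) (t : ℝ) :
    y t = c - m * cos (ω * t - φ) ∧ z t = ω * m * sin (ω * t - φ) := by
  have hphase : ∀ t, HasDerivAt (fun t => ω * t - φ) ω t := fun t => by
    simpa using ((hasDerivAt_id t).const_mul ω).sub_const φ
  have hw : ∀ t, HasDerivAt (fun t => y t - (c - m * cos (ω * t - φ)))
      (z t - ω * m * sin (ω * t - φ)) t := fun t =>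
    ((hy t).sub (((hphase t).cos.const_mul m).const_sub c)).congr_deriv (by ring)
  have hv : ∀ t, HasDerivAt (fun t => z t - ω * m * sin (ω * t - φ))
      (-ω ^ 2 * (y t - (c - m * cos (ω * t - φ)))) t := fun t =>
    ((hz t).sub ((hphase t).sin.const_mul (ω * m))).congr_deriv (by ring)
  obtain ⟨hyt, hzt⟩ := eq_zero_of_hasDerivAt_harmonic hw hv
    (by simp [hy0, cos_neg]) (by simp [hz0, sin_neg]) t
  exact ⟨sub_eq_zero.mp hyt, sub_eq_zero.mp hzt⟩

theorem exists_polar_angle (x y : ℝ) :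
    ∃ φ ∈ Set.Ioc (-π) π, 0 ≤ φ * y ∧
      √(x ^ 2 + y ^ 2) * cos φ = x ∧ √(x ^ 2 + y ^ 2) * sin φ = y := by
  set z : ℂ := ⟨x, y⟩
  have hnorm : ‖z‖ = √(x ^ 2 + y ^ 2) := by
    simp [z, Complex.norm_def, Complex.normSq_apply, sq]
  refine ⟨z.arg, Complex.arg_mem_Ioc z, ?_, ?_, ?_⟩
  · rcases le_or_gt 0 y with hy | hy
    · exact mul_nonneg (Complex.arg_nonneg_iff.mpr hy) hy
    · exact mul_nonneg_of_nonpos_of_nonpos (Complex.arg_neg_iff.mpr hy).le hy.le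
  · rw [← hnorm]; exact Complex.norm_mul_cos_arg z
  · rw [← hnorm]; exact Complex.norm_mul_sin_arg z

/-- The quadratic system with `p₂ = p₃ = p₅ = 0`. -/
structure IsCase6Solution (p₁ p₄ ρ : ℝ) (D R I : ℝ → ℝ) : Prop where
  hasDerivAt_D : ∀ τ, HasDerivAt D (2 * p₁ * I τ * D τ) τ
  hasDerivAt_R : ∀ τ, HasDerivAt R (2 * p₁ * I τ * R τ - 2 * p₄ * ρ * I τ) τ
  hasDerivAt_I : ∀ τ, HasDerivAt I (-(2 * p₁ * (D τ ^ 2 + R τ ^ 2)) + 2 * p₄ * ρ * R τ) τ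

namespace IsCase6Solution

variable {p₁ p₄ ρ : ℝ} {D R I F : ℝ → ℝ}

theorem sq_add_sq_add_sq (h : IsCase6Solution p₁ p₄ ρ D R I) (t : ℝ) :
    D t ^ 2 + R t ^ 2 + I t ^ 2 = D 0 ^ 2 + R 0 ^ 2 + I 0 ^ 2 :=
  eq_of_forall_hasDerivAt_zero (f := fun t => D t ^ 2 + R t ^ 2 + I t ^ 2) (fun x =>
    ((((h.hasDerivAt_D x).pow 2).add ((h.hasDerivAt_R x).pow 2)).add
      ((h.hasDerivAt_I x).pow 2)).congr_deriv (by ring)) t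

theorem exists_integratingFactor (h : IsCase6Solution p₁ p₄ ρ D R I) {c : ℝ}
    (hc : 0 < c) :
    ∃ F : ℝ → ℝ, F 0 = c ∧ (∀ t, 0 < F t) ∧ ∀ t, HasDerivAt F (-(2 * p₁ * I t) * F t) t :=
  exists_pos_hasDerivAt_mul_self
    (continuous_iff_continuousAt.2 fun t => ((h.hasDerivAt_I t).continuousAt.const_mul _).neg) hc

theorem D_mul_eq (h : IsCase6Solution p₁ p₄ ρ D R I)
    (hF : ∀ t, HasDerivAt F (-(2 * p₁ * I t) * F t) t) (t : ℝ) : D t * F t = D 0 * F 0 :=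
  mul_eq_of_hasDerivAt_mul_self (g := fun t => 2 * p₁ * I t)
    (fun x => (h.hasDerivAt_D x).congr_deriv (by ring)) hF t

theorem R_mul_eq (h : IsCase6Solution p₁ p₄ ρ D R I)
    (hF : ∀ t, HasDerivAt F (-(2 * p₁ * I t) * F t) t) (t : ℝ) :
    (p₁ * R t - p₄ * ρ) * F t = (p₁ * R 0 - p₄ * ρ) * F 0 :=
  mul_eq_of_hasDerivAt_mul_self (g := fun t => 2 * p₁ * I t)
    (fun x => ((h.hasDerivAt_R x).const_mul p₁).sub_const (p₄ * ρ) |>.congr_deriv (by ring))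
    hF t

theorem D_eq_div (h : IsCase6Solution p₁ p₄ ρ D R I)
    (hF : ∀ t, HasDerivAt F (-(2 * p₁ * I t) * F t) t) {t : ℝ} (ht : F t ≠ 0) :
    D t = F 0 * D 0 / F t := by
  rw [eq_div_iff ht, h.D_mul_eq hF t, mul_comm]

theorem R_eq_add_div (h : IsCase6Solution p₁ p₄ ρ D R I)
    (hF : ∀ t, HasDerivAt F (-(2 * p₁ * I t) * F t) t) (hp₁ : p₁ ≠ 0) {t : ℝ}
    (ht : F t ≠ 0) :
    R t = p₄ / p₁ * ρ + F 0 * (R 0 - p₄ / p₁ * ρ) / F t := by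
  have hR_mul := h.R_mul_eq hF t
  field_simp
  linear_combination hR_mul

theorem hasDerivAt_neg_two_mul_I_mul (h : IsCase6Solution p₁ p₄ ρ D R I)
    (hF : ∀ t, HasDerivAt F (-(2 * p₁ * I t) * F t) t) (t : ℝ) :
    HasDerivAt (fun t => -(2 * p₁ * I t) * F t)
      (4 * p₁ ^ 2 * (D 0 ^ 2 + R 0 ^ 2 + I 0 ^ 2) * F t
        - 4 * p₄ * ρ * ((p₁ * R 0 - p₄ * ρ) * F 0 + p₄ * ρ * F t)) t :=
  (((h.hasDerivAt_I t).const_mul (2 * p₁)).neg.mul (hF t)).congr_deriv (by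
    simp only [Pi.neg_apply]
    linear_combination (4 * p₁ ^ 2 * F t) * h.sq_add_sq_add_sq t
      - (4 * p₄ * ρ) * h.R_mul_eq hF t)

end IsCase6Solution

theorem stmt_6_general (p₁ p₄ ρ : ℝ) (hp₁ : 0 < p₁) (hp : p₁ < p₄) (hρ : 0 < ρ)
    (a : ℝ) (ha : a = p₄ / p₁) (D R I : ℝ → ℝ)
    (hD : ∀ τ, HasDerivAt D (2 * p₁ * I τ * D τ) τ)
    (hR : ∀ τ, HasDerivAt R (2 * p₁ * I τ * R τ - 2 * p₄ * ρ * I τ) τ)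
    (hI : ∀ τ, HasDerivAt I (-(2 * p₁ * (D τ ^ 2 + R τ ^ 2)) + 2 * p₄ * ρ * R τ) τ)
    (hsphere : D 0 ^ 2 + R 0 ^ 2 + I 0 ^ 2 = ρ ^ 2)
    (M : ℝ) (hM : M = Real.sqrt ((a * ρ - R 0) ^ 2 - (a ^ 2 - 1) * D 0 ^ 2)) :
    ∃ τ₀ ∈ Set.Ioc (-Real.pi) Real.pi, τ₀ * I 0 ≥ 0 ∧
      (a ^ 2 - 1) * ρ / (a * (a * ρ - R 0) - M * Real.cos τ₀) = 1 ∧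
      ∀ τ : ℝ,
        D τ = (a ^ 2 - 1) * ρ * D 0
                / (a * (a * ρ - R 0)
                    - M * Real.cos (2 * p₁ * ρ * Real.sqrt (a ^ 2 - 1) * τ - τ₀)) ∧
        R τ = a * ρ + (a ^ 2 - 1) * ρ * (R 0 - a * ρ)
                / (a * (a * ρ - R 0)
                    - M * Real.cos (2 * p₁ * ρ * Real.sqrt (a ^ 2 - 1) * τ - τ₀)) ∧
        I τ = -(ρ * Real.sqrt (a ^ 2 - 1) * M
                  * Real.sin (2 * p₁ * ρ * Real.sqrt (a ^ 2 - 1) * τ - τ₀))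
                / (a * (a * ρ - R 0)
                    - M * Real.cos (2 * p₁ * ρ * Real.sqrt (a ^ 2 - 1) * τ - τ₀)) := by
  have h : IsCase6Solution p₁ p₄ ρ D R I := ⟨hD, hR, hI⟩
  have hp₄ : p₄ = a * p₁ := by rw [ha, div_mul_cancel₀ _ hp₁.ne']
  have ha2 : 0 < a ^ 2 - 1 := by
    have : 1 < a := by rw [ha, one_lt_div hp₁]; exact hp
    nlinarith
  set s := √(a ^ 2 - 1)
  have hs2 : s ^ 2 = a ^ 2 - 1 := sq_sqrt ha2.le
  have hs : 0 < s := sqrt_pos.mpr ha2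
  obtain ⟨τ₀, hτ₀, hsign, hcos, hsin⟩ := exists_polar_angle (ρ - a * R 0) (s * I 0)
  have hM' : M = √((ρ - a * R 0) ^ 2 + (s * I 0) ^ 2) := by
    rw [hM]; congr 1; linear_combination (-(a ^ 2 - 1)) * hsphere - I 0 ^ 2 * hs2
  rw [← hM'] at hcos hsin
  obtain ⟨F, hF0, hFpos, hF⟩ := h.exists_integratingFactor (mul_pos ha2 hρ)
  have hF'' : ∀ t, HasDerivAt (fun t => -(2 * p₁ * I t) * F t)
      (-(2 * p₁ * ρ * s) ^ 2 * (F t - a * (a * ρ - R 0))) t := fun t =>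
    (h.hasDerivAt_neg_two_mul_I_mul hF t).congr_deriv (by
      rw [hsphere, hF0, hp₄]
      linear_combination (4 * p₁ ^ 2 * ρ ^ 2 * (F t - a * (a * ρ - R 0))) * hs2)
  have hFcos := hasDerivAt_harmonic_eq hF hF'' (m := M) (φ := τ₀)
    (by rw [hF0]; linear_combination hcos)
    (by rw [hF0]; linear_combination (2 * p₁ * ρ * s) * hsin + (2 * p₁ * ρ * I 0) * hs2)
  refine ⟨τ₀, hτ₀, nonneg_of_mul_nonneg_right (by linarith) hs, ?_, fun τ => ?_⟩
  · rw [show a * (a * ρ - R 0) - M * cos τ₀ = (a ^ 2 - 1) * ρ by linear_combination -hcos]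
    exact div_self (mul_pos ha2 hρ).ne'
  obtain ⟨hFτ, hF'τ⟩ := hFcos τ
  have hFne := (hFpos τ).ne'
  rw [← hFτ]
  refine ⟨by rw [h.D_eq_div hF hFne, hF0],
    by rw [h.R_eq_add_div hF hp₁.ne' hFne, ← ha, hF0], ?_⟩
  rw [eq_div_iff hFne]
  exact mul_left_cancel₀ (by positivity : 2 * p₁ ≠ 0) (by linear_combination -hF'τ)

/-- Case 6 (combination of p₁- and p₄-components), regime p₁ < p₄:
explicit (periodic) solution. -/
theorem stmt_6 (p₁ p₄ ρ : ℝ) (hp₁ : 0 < p₁) (hp : p₁ < p₄) (hρ : 0 < ρ)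
    (a : ℝ) (ha : a = p₄ / p₁) (D R I : ℝ → ℝ)
    (hD : ∀ τ, HasDerivAt D (2 * p₁ * I τ * D τ) τ)
    (hR : ∀ τ, HasDerivAt R (2 * p₁ * I τ * R τ - 2 * p₄ * ρ * I τ) τ)
    (hI : ∀ τ, HasDerivAt I (-(2 * p₁ * (D τ ^ 2 + R τ ^ 2)) + 2 * p₄ * ρ * R τ) τ)
    (hsphere : D 0 ^ 2 + R 0 ^ 2 + I 0 ^ 2 = ρ ^ 2)
    (hne₁ : (D 0, R 0, I 0) ≠ (ρ * Real.sqrt (1 - 1 / a ^ 2), ρ / a, 0))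
    (hne₂ : (D 0, R 0, I 0) ≠ (-(ρ * Real.sqrt (1 - 1 / a ^ 2)), ρ / a, 0))
    (M : ℝ) (hM : M = Real.sqrt ((a * ρ - R 0) ^ 2 - (a ^ 2 - 1) * D 0 ^ 2)) :
    ∃ τ₀ ∈ Set.Ioc (-Real.pi) Real.pi, τ₀ * I 0 ≥ 0 ∧
      (a ^ 2 - 1) * ρ / (a * (a * ρ - R 0) - M * Real.cos τ₀) = 1 ∧
      ∀ τ : ℝ,
        D τ = (a ^ 2 - 1) * ρ * D 0
                / (a * (a * ρ - R 0)
                    - M * Real.cos (2 * p₁ * ρ * Real.sqrt (a ^ 2 - 1) * τ - τ₀)) ∧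
        R τ = a * ρ + (a ^ 2 - 1) * ρ * (R 0 - a * ρ)
                / (a * (a * ρ - R 0)
                    - M * Real.cos (2 * p₁ * ρ * Real.sqrt (a ^ 2 - 1) * τ - τ₀)) ∧
        I τ = -(ρ * Real.sqrt (a ^ 2 - 1) * M
                  * Real.sin (2 * p₁ * ρ * Real.sqrt (a ^ 2 - 1) * τ - τ₀))
                / (a * (a * ρ - R 0)
                    - M * Real.cos (2 * p₁ * ρ * Real.sqrt (a ^ 2 - 1) * τ - τ₀)) :=
  stmt_6_general p₁ p₄ ρ hp₁ hp hρ a ha D R I hD hR hI hsphere M hM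
end
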